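/- Let D_1, ..., D_m : [0,1] → ℝ be strictly increasing continuous functions and suppose α = (α_1, ..., α_m) with α_k ∈ [0,1] and ∑ α_k = 1 satisfies D_1(α_1) = D_2(α_2) = ... = D_m(α_m) = D for some constant D. Then α minimizes max_k D_k(α_k) over all vectors α' ∈ [0,1]^m with ∑ α'_k = 1. -/
import Mathlib

/-- Equalization principle (Proposition 1): if the strictly increasing continuous
latencies are all equal under distribution `α`, then `α` minimizes the maximum latency
over all feasible distributions. -/
theorem equalization_minimizes_max_latency
    {m : ℕ} (hm : 0 < m)
    (D : Fin m → ℝ → ℝ)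
    (hmono : ∀ k, StrictMonoOn (D k) (Set.Icc 0 1))
    (hcont : ∀ k, ContinuousOn (D k) (Set.Icc 0 1))
    (α : Fin m → ℝ) (hα : ∀ k, α k ∈ Set.Icc (0:ℝ) 1)
    (hsum : ∑ k, α k = 1)
    (Dval : ℝ) (heq : ∀ k, D k (α k) = Dval)
    (α' : Fin m → ℝ) (hα' : ∀ k, α' k ∈ Set.Icc (0:ℝ) 1)
    (hsum' : ∑ k, α' k = 1) :
    Finset.univ.sup' (Finset.univ_nonempty_iff.mpr (Fin.pos_iff_nonempty.mp hm))
        (fun k => D k (α k)) ≤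
      Finset.univ.sup' (Finset.univ_nonempty_iff.mpr (Fin.pos_iff_nonempty.mp hm))
        (fun k => D k (α' k)) := by
  -- there is some k with α k ≤ α' k
  obtain ⟨k, hk⟩ : ∃ k, α k ≤ α' k := by
    by_contra h
    push_neg at h
    have : ∑ k, α' k < ∑ k, α k :=
      Finset.sum_lt_sum_of_nonempty (Finset.univ_nonempty_iff.mpr (Fin.pos_iff_nonempty.mp hm))
        (fun i _ => h i)
    rw [hsum, hsum'] at this
    exact lt_irrefl _ this
  have h1 : D k (α k) ≤ D k (α' k) :=
    (hmono k).monotoneOn (hα k) (hα' k) hk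
  apply Finset.sup'_le
  intro i _
  calc D i (α i) = D k (α k) := by rw [heq i, heq k]
    _ ≤ D k (α' k) := h1
    _ ≤ _ := Finset.le_sup' (fun k => D k (α' k)) (Finset.mem_univ k)
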